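/- arXiv:2402.03523 — 4 statements merged into one kernel-verified Lean document; each statement's English description precedes it below -/
import Mathlib

section
/- The functorial action of the smash product preserves identities and composition up to pointed homotopy: id_A ∧ id_B is pointedly equal to id_{A∧B}, and (f' ∘ f) ∧ (g' ∘ g) is pointedly equal to (f' ∧ g') ∘ (f ∧ g). -/
universe u

namespace SmashPaper

/-- Relation generating the wedge `A ∨ B` as a quotient of `A ⊕ B`. -/
inductive WedgeRel (A B : Pointed.{u}) : (A ⊕ B) → (A ⊕ B) → Prop
  | glue : WedgeRel A B (Sum.inl A.point) (Sum.inr B.point)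

/-- The wedge sum `A ∨ B` of pointed types. -/
def Wedge (A B : Pointed.{u}) : Type u := Quot (WedgeRel A B)

/-- The inclusion `A ∨ B → A × B`. -/
def wedgeIncl (A B : Pointed.{u}) : Wedge A B → A × B :=
  Quot.lift (Sum.elim (fun a => (a, B.point)) (fun b => (A.point, b)))
    (by rintro _ _ ⟨⟩; rfl)

/-- The relation generating the cofibre of a map `f : W → P`. -/
inductive CofiberRel {W P : Type u} (f : W → P) : (P ⊕ PUnit) → (P ⊕ PUnit) → Prop
  | glue (w : W) : CofiberRel f (Sum.inl (f w)) (Sum.inr PUnit.unit)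

/-- The cofibre (mapping cone) of `f`, i.e. the pushout of `1 ← W → P`. -/
def Cofiber {W P : Type u} (f : W → P) : Type u := Quot (CofiberRel f)

/-- The cofibre point. -/
def Cofiber.base {W P : Type u} (f : W → P) : Cofiber f := Quot.mk _ (Sum.inr PUnit.unit)

/-- The inclusion of `P` into the cofibre of `f : W → P`. -/
def Cofiber.incl {W P : Type u} (f : W → P) (p : P) : Cofiber f := Quot.mk _ (Sum.inl p)

/-- The smash product `A ∧ B`: the cofibre of the inclusion `A ∨ B → A × B`. -/
def Smash (A B : Pointed.{u}) : Type u := Cofiber (wedgeIncl A B)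

/-- The point constructor `⟨a, b⟩` of `A ∧ B`. -/
def Smash.mk {A B : Pointed.{u}} (a : A) (b : B) : Smash A B :=
  Quot.mk _ (Sum.inl (a, b))

/-- The basepoint `⋆∧` of `A ∧ B`. -/
def Smash.pt {A B : Pointed.{u}} : Smash A B := Quot.mk _ (Sum.inr PUnit.unit)

/-- `A ∧ B` as a pointed type. -/
def pSmash (A B : Pointed.{u}) : Pointed.{u} := ⟨Smash A B, Smash.pt⟩

theorem Smash.pushl {A B : Pointed.{u}} (a : A) :
    Smash.mk a B.point = (Smash.pt : Smash A B) :=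
  Quot.sound (CofiberRel.glue (Quot.mk _ (Sum.inl a)))

theorem Smash.pushr {A B : Pointed.{u}} (b : B) :
    Smash.mk A.point b = (Smash.pt : Smash A B) :=
  Quot.sound (CofiberRel.glue (Quot.mk _ (Sum.inr b)))

/-- Functorial action of the smash product on pointed maps. -/
def smashMap {A B C D : Pointed.{u}} (f : Pointed.Hom A C) (g : Pointed.Hom B D) :
    Pointed.Hom (pSmash A B) (pSmash C D) where
  toFun := Quot.lift
    (Sum.elim (fun p => Smash.mk (f.toFun p.1) (g.toFun p.2)) (fun _ => Smash.pt))
    (by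
      rintro _ _ ⟨w⟩
      induction w using Quot.ind with
      | mk x =>
        rcases x with a | b
        · show Smash.mk (f.toFun a) (g.toFun B.point) = Smash.pt
          rw [g.map_point]; exact Smash.pushl _
        · show Smash.mk (f.toFun A.point) (g.toFun b) = Smash.pt
          rw [f.map_point]; exact Smash.pushr _)
  map_point := rfl

/-- The braiding `β : A ∧ B → B ∧ A` induced by the swap map on products. -/
def braidHom (A B : Pointed.{u}) : Pointed.Hom (pSmash A B) (pSmash B A) where
  toFun := Quot.lift
    (Sum.elim (fun p => Smash.mk p.2 p.1) (fun _ => Smash.pt))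
    (by
      rintro _ _ ⟨w⟩
      induction w using Quot.ind with
      | mk x =>
        rcases x with a | b
        · exact Smash.pushr a
        · exact Smash.pushl b)
  map_point := rfl

/-- Auxiliary map for the associator. -/
def assocAux {A B C : Pointed.{u}} (x : Smash A B) (c : C) : Smash A (pSmash B C) :=
  Quot.lift
    (Sum.elim (fun p => Smash.mk (B := pSmash B C) p.1 (Smash.mk p.2 c)) (fun _ => Smash.pt))
    (by
      rintro _ _ ⟨w⟩
      induction w using Quot.ind with
      | mk y =>
        rcases y with a | b
        · show Smash.mk (B := pSmash B C) a (Smash.mk B.point c) = Smash.pt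
          rw [Smash.pushr]; exact Smash.pushl a
        · exact Smash.pushr _) x

/-- The associator `α : (A ∧ B) ∧ C → A ∧ (B ∧ C)`. -/
def assocHom (A B C : Pointed.{u}) :
    Pointed.Hom (pSmash (pSmash A B) C) (pSmash A (pSmash B C)) where
  toFun := Quot.lift
    (Sum.elim (fun p => assocAux p.1 p.2) (fun _ => Smash.pt))
    (by
      rintro _ _ ⟨w⟩
      induction w using Quot.ind with
      | mk y =>
        rcases y with x | c
        · show assocAux x C.point = Smash.pt
          induction x using Quot.ind with
          | mk z =>
            rcases z with p | u
            · show Smash.mk (B := pSmash B C) p.1 (Smash.mk p.2 C.point) = Smash.pt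
              rw [Smash.pushl]; exact Smash.pushl p.1
            · rfl
        · rfl)
  map_point := rfl

theorem assocHom_mk {A B C : Pointed.{u}} (a : A) (b : B) (c : C) :
    (assocHom A B C).toFun (Smash.mk (Smash.mk a b) c) = Smash.mk (B := pSmash B C) a (Smash.mk b c) :=
  rfl

/-- Pointed equivalences. -/
structure PtdEquiv (A B : Pointed.{u}) where
  toEquiv : A ≃ B
  map_point : toEquiv A.point = B.point

/-- The pointed booleans `𝟚`, the unit for the smash product. -/
def pBool : Pointed.{0} := ⟨Bool, true⟩


/-- the functorial action of the smash product preserves identities and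
composition. -/
theorem smash_functor_laws (A B C D E F : Pointed.{u})
    (f : Pointed.Hom A C) (g : Pointed.Hom B D)
    (f' : Pointed.Hom C E) (g' : Pointed.Hom D F) :
    smashMap (Pointed.Hom.id A) (Pointed.Hom.id B) = Pointed.Hom.id (pSmash A B) ∧
    smashMap (f.comp f') (g.comp g') = (smashMap f g).comp (smashMap f' g') := by
  constructor <;>
  · apply Pointed.Hom.ext
    funext x
    induction x using Quot.ind with
    | mk y => rcases y with p | u <;> simp [smashMap, Pointed.Hom.comp] <;> rfl

end SmashPaper
end

section
/- The associator α_{A,B,C} : (A ∧ B) ∧ C ≃⋆ A ∧ (B ∧ C) is natural in all three arguments: for pointed maps f : A →⋆ A', g : B →⋆ B', h : C →⋆ C', one has (f ∧ (g ∧ h)) ∘ α_{A,B,C} = α_{A',B',C'} ∘ ((f ∧ g) ∧ h) as pointed maps. -/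
universe u

namespace SmashPaper

/-! Both composites send `⟨⟨a, b⟩, c⟩` to `⟨f a, ⟨g b, h c⟩⟩` by definition, and a pointed map
out of `(A ∧ B) ∧ C` is determined by its values on such triples: every other point is
identified with the basepoint. -/

theorem Smash.ind {A B : Pointed.{u}} {motive : Smash A B → Prop}
    (mk : ∀ a b, motive (Smash.mk a b)) (pt : motive Smash.pt) : ∀ x, motive x := by
  refine Quot.ind ?_
  rintro (⟨a, b⟩ | ⟨⟩)
  exacts [mk a b, pt]

theorem Smash.mk_pt_left {A B C : Pointed.{u}} (c : C) :
    Smash.mk (Smash.pt : Smash A B) c = (Smash.pt : Smash (pSmash A B) C) :=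
  Smash.pushr c

theorem Smash.hom_ext {A B X : Pointed.{u}} {φ ψ : Pointed.Hom (pSmash A B) X}
    (h : ∀ a b, φ.toFun (Smash.mk a b) = ψ.toFun (Smash.mk a b)) : φ = ψ := by
  ext x
  induction x using Smash.ind with
  | mk a b => exact h a b
  | pt => exact φ.map_point.trans ψ.map_point.symm

theorem Smash.hom_ext₃ {A B C X : Pointed.{u}} {φ ψ : Pointed.Hom (pSmash (pSmash A B) C) X}
    (h : ∀ a b c, φ.toFun (Smash.mk (Smash.mk a b) c) = ψ.toFun (Smash.mk (Smash.mk a b) c)) :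
    φ = ψ := by
  refine Smash.hom_ext fun x c => ?_
  induction x using Smash.ind with
  | mk a b => exact h a b c
  | pt =>
    rw [Smash.mk_pt_left]
    exact φ.map_point.trans ψ.map_point.symm

/-- naturality of the associator in all three arguments. -/
theorem smash_assoc_natural (A B C A' B' C' : Pointed.{u})
    (f : Pointed.Hom A A') (g : Pointed.Hom B B') (h : Pointed.Hom C C') :
    (assocHom A B C).comp (smashMap f (smashMap g h))
      = (smashMap (smashMap f g) h).comp (assocHom A' B' C') :=
  Smash.hom_ext₃ fun _ _ _ => rfl

end SmashPaper
end

section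
/- The braiding β_{A,B} : A ∧ B ≃⋆ B ∧ A is natural: for pointed maps f : A →⋆ C and g : B →⋆ D, one has (g ∧ f) ∘ β_{A,B} = β_{C,D} ∘ (f ∧ g) as pointed maps A ∧ B →⋆ D ∧ C. -/
universe u

namespace SmashPaper

theorem braidHom_mk {A B : Pointed.{u}} (a : A) (b : B) :
    (braidHom A B).toFun (Smash.mk a b) = Smash.mk b a := rfl

theorem smashMap_mk {A B C D : Pointed.{u}} (f : Pointed.Hom A C) (g : Pointed.Hom B D)
    (a : A) (b : B) :
    (smashMap f g).toFun (Smash.mk a b) = Smash.mk (f.toFun a) (g.toFun b) := rfl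

theorem braidHom_pt {A B : Pointed.{u}} :
    (braidHom A B).toFun Smash.pt = Smash.pt := rfl

theorem smashMap_pt {A B C D : Pointed.{u}} (f : Pointed.Hom A C) (g : Pointed.Hom B D) :
    (smashMap f g).toFun Smash.pt = Smash.pt := rfl

/-- naturality of the braiding. -/
theorem smash_braid_natural (A B C D : Pointed.{u})
    (f : Pointed.Hom A C) (g : Pointed.Hom B D) :
    (braidHom A B).comp (smashMap g f)
      = (smashMap f g).comp (braidHom C D) := by
  apply Pointed.Hom.ext
  funext x
  induction x using Quot.ind with
  | mk y =>
    rcases y with ⟨a, b⟩ | u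
    · show (smashMap g f).toFun ((braidHom A B).toFun (Smash.mk a b))
        = (braidHom C D).toFun ((smashMap f g).toFun (Smash.mk a b))
      rw [braidHom_mk, smashMap_mk, smashMap_mk, braidHom_mk]
    · show (smashMap g f).toFun ((braidHom A B).toFun Smash.pt)
        = (braidHom C D).toFun ((smashMap f g).toFun Smash.pt)
      rw [braidHom_pt, smashMap_pt, smashMap_pt, braidHom_pt]

end SmashPaper
end

section
/- Define FS_{i≤n}(A_i) by recursion: FS_{i≤0} = 1 and FS_{i≤n} = (FS_{i≤n-1} × A_n) + (A_0 × ⋯ × A_{n-1}), with canonical map γ_n : FS_{i≤n}(A_i) → A_0 × ⋯ × A_n, and let ⋀̃_{i≤n} A_i be the cofibre of γ_n. Then the composite FS_{i≤n}(A_i) → A_0 × ⋯ × A_n → ⋀_{i≤n} A_i (into the iterated left-associated smash product) is null-homotopic, yielding a basepoint-preserving map ι : ⋀̃_{i≤n} A_i → ⋀_{i≤n} A_i with ι⟨a_0,…,a_n⟩ = ⟨a_0,…,a_n⟩. -/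
universe u

namespace SmashPaper

/-- `FS_{i ≤ n}(A_i)`, defined by recursion. -/
def FS (A : ℕ → Pointed.{u}) : ℕ → Type u
  | 0 => PUnit
  | n+1 => (FS A n × A (n+1)) ⊕ (∀ i : Fin (n+1), A i)

/-- The canonical map `γ_n : FS_{i ≤ n}(A_i) → A_0 × ⋯ × A_n`. -/
def gamma (A : ℕ → Pointed.{u}) : (n : ℕ) → FS A n → (∀ i : Fin (n+1), A i)
  | 0, _ => fun i => (A i).point
  | n+1, Sum.inl (x, a) => Fin.snoc (gamma A n x) a
  | n+1, Sum.inr v => Fin.snoc v (A (n+1)).point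

/-- The left-associated iterated smash product `⋀_{i ≤ n} A_i`. -/
def bigSmash (A : ℕ → Pointed.{u}) : ℕ → Pointed.{u}
  | 0 => A 0
  | n+1 => pSmash (bigSmash A n) (A (n+1))

/-- The point constructor `⟨a_0, …, a_n⟩` of `⋀_{i ≤ n} A_i`. -/
def bigMk (A : ℕ → Pointed.{u}) : (n : ℕ) → (∀ i : Fin (n+1), A i) → bigSmash A n
  | 0, v => v 0
  | n+1, v =>
      Smash.mk (A := bigSmash A n) (B := A (n+1))
        (bigMk A n fun i => v i.castSucc) (v (Fin.last (n+1)))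

/-- `⋀̃_{i ≤ n} A_i`, the cofibre of `γ_n`. -/
def TildeBig (A : ℕ → Pointed.{u}) (n : ℕ) : Type u := Cofiber (gamma A n)

/-! A tuple in the image of `γ_n` either ends in the basepoint of `A_n` or has its first `n`
coordinates in the image of `γ_{n-1}`. Since `⋀_{i≤n} A_i = (⋀_{i≤n-1} A_i) ∧ A_n`, the first kind
is collapsed by `⟨x, ⋆⟩ = ⋆` and the second, inductively, by `⟨⋆, a⟩ = ⋆`. The map `ι` is then the
one induced on the cofibre. -/

def Cofiber.desc {W P : Type u} {Q : Sort*} (f : W → P) (g : P → Q) (q : Q)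
    (h : ∀ w, g (f w) = q) : Cofiber f → Q :=
  Quot.lift (Sum.elim g fun _ => q) (by rintro _ _ ⟨w⟩; exact h w)

@[simp]
theorem Cofiber.desc_base {W P : Type u} {Q : Sort*} (f : W → P) (g : P → Q) (q : Q)
    (h : ∀ w, g (f w) = q) : Cofiber.desc f g q h (Cofiber.base f) = q :=
  rfl

@[simp]
theorem Cofiber.desc_incl {W P : Type u} {Q : Sort*} (f : W → P) (g : P → Q) (q : Q)
    (h : ∀ w, g (f w) = q) (p : P) : Cofiber.desc f g q h (Cofiber.incl f p) = g p :=
  rfl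

theorem bigMk_snoc (A : ℕ → Pointed.{u}) (n : ℕ) (v : ∀ i : Fin (n+1), A i) (a : A (n+1)) :
    bigMk A (n+1) (Fin.snoc v a) = Smash.mk (A := bigSmash A n) (bigMk A n v) a := by
  simp only [bigMk, Fin.snoc_castSucc, Fin.snoc_last]
  rfl

theorem bigMk_gamma (A : ℕ → Pointed.{u}) :
    ∀ (n : ℕ) (x : FS A n), bigMk A n (gamma A n x) = (bigSmash A n).point
  | 0, _ => rfl
  | n+1, Sum.inl (x, a) => by
    rw [gamma, bigMk_snoc, bigMk_gamma A n x]
    exact Smash.pushr a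
  | n+1, Sum.inr v => by
    rw [gamma, bigMk_snoc]
    exact Smash.pushl _

/-- the composite `FS_{i≤n}(A_i) → A_0 × ⋯ × A_n → ⋀_{i≤n} A_i` is
null-homotopic, and there is an induced basepoint-preserving map
`ι : ⋀̃_{i≤n} A_i → ⋀_{i≤n} A_i` with `ι⟨a_0,…,a_n⟩ = ⟨a_0,…,a_n⟩`. -/
theorem tilde_incl_exists (A : ℕ → Pointed.{u}) (n : ℕ) :
    (∀ x : FS A n, bigMk A n (gamma A n x) = (bigSmash A n).point) ∧
    ∃ ι : TildeBig A n → bigSmash A n,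
      ι (Cofiber.base (gamma A n)) = (bigSmash A n).point ∧
      ∀ v : ∀ i : Fin (n+1), A i, ι (Cofiber.incl (gamma A n) v) = bigMk A n v :=
  ⟨bigMk_gamma A n, Cofiber.desc _ (bigMk A n) _ (bigMk_gamma A n),
    Cofiber.desc_base _ _ _ _, Cofiber.desc_incl _ _ _ _⟩

end SmashPaper
end
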